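/- arXiv:1704.03485 — 3 statements merged into one kernel-verified Lean document; each statement's English description precedes it below -/
import Mathlib

section
/- A convex cone X (an additive commutative monoid equipped with a module structure over the nonnegative reals ℝ≥0) admits an injective map f into some real vector space V satisfying f(x + y) = f(x) + f(y) and f(c • x) = c • f(x) for all x, y in X and all c in ℝ≥0, if and only if X is cancellative (x + y = x + z implies y = z). -/
open scoped NNReal

namespace Stmt2Aux

variable {X : Type u} [AddCommMonoid X] [Module ℝ≥0 X]

/-- The Grothendieck-group setoid on `X × X`. -/
def gSetoid (X : Type u) [AddCommMonoid X] (hc : ∀ x y z : X, x + y = x + z → y = z) :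
    Setoid (X × X) where
  r p q := p.1 + q.2 = q.1 + p.2
  iseqv := by
    refine ⟨fun p => rfl, fun h => h.symm, ?_⟩
    intro p q r h1 h2
    have key : (q.1 + q.2) + (p.1 + r.2) = (q.1 + q.2) + (r.1 + p.2) := by
      have : (p.1 + q.2) + (q.1 + r.2) = (q.1 + p.2) + (r.1 + q.2) := by rw [h1, h2]
      calc (q.1 + q.2) + (p.1 + r.2) = (p.1 + q.2) + (q.1 + r.2) := by abel
        _ = (q.1 + p.2) + (r.1 + q.2) := this
        _ = (q.1 + q.2) + (r.1 + p.2) := by abel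
    exact hc _ _ _ key

variable (hc : ∀ x y z : X, x + y = x + z → y = z)

def G (X : Type u) [AddCommMonoid X] (hc : ∀ x y z : X, x + y = x + z → y = z) : Type u :=
  Quotient (gSetoid X hc)

def mk (p : X × X) : G X hc := Quotient.mk (gSetoid X hc) p

omit [Module ℝ≥0 X] in
lemma mk_eq {p q : X × X} : mk hc p = mk hc q ↔ p.1 + q.2 = q.1 + p.2 :=
  ⟨Quotient.exact, fun h => Quotient.sound h⟩

omit [Module ℝ≥0 X] in
lemma mk_surj : ∀ v : G X hc, ∃ p : X × X, v = mk hc p := by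
  rintro ⟨p⟩; exact ⟨p, rfl⟩

def gAddOp : G X hc → G X hc → G X hc :=
  Quotient.map₂ (fun p q => (p.1 + q.1, p.2 + q.2)) (by
    rintro ⟨a,b⟩ ⟨a',b'⟩ (h1 : a + b' = a' + b) ⟨c,d⟩ ⟨c',d'⟩ (h2 : c + d' = c' + d)
    show (a + c) + (b' + d') = (a' + c') + (b + d)
    calc (a + c) + (b' + d') = (a + b') + (c + d') := by abel
      _ = (a' + b) + (c' + d) := by rw [h1, h2]
      _ = (a' + c') + (b + d) := by abel)

omit [Module ℝ≥0 X] in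
lemma gAddOp_mk (p q : X × X) :
    gAddOp hc (mk hc p) (mk hc q) = mk hc (p.1 + q.1, p.2 + q.2) := rfl

def gNegOp : G X hc → G X hc :=
  Quotient.map (fun p => (p.2, p.1)) (by
    rintro ⟨a,b⟩ ⟨a',b'⟩ (h : a + b' = a' + b)
    show b + a' = b' + a
    rw [add_comm b a', add_comm b' a]; exact h.symm)

omit [Module ℝ≥0 X] in
lemma gNegOp_mk (p : X × X) : gNegOp hc (mk hc p) = mk hc (p.2, p.1) := rfl

def gAddCommGroup : AddCommGroup (G X hc) :=
  letI : Add (G X hc) := ⟨gAddOp hc⟩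
  letI : Zero (G X hc) := ⟨mk hc (0, 0)⟩
  letI : Neg (G X hc) := ⟨gNegOp hc⟩
  { add := (· + ·)
    zero := 0
    neg := Neg.neg
    nsmul := nsmulRec
    zsmul := zsmulRec
    add_assoc := by
      intro a b c
      obtain ⟨p, rfl⟩ := mk_surj hc a; obtain ⟨q, rfl⟩ := mk_surj hc b
      obtain ⟨r, rfl⟩ := mk_surj hc c
      show gAddOp hc (gAddOp hc _ _) _ = gAddOp hc _ (gAddOp hc _ _)
      rw [gAddOp_mk, gAddOp_mk, gAddOp_mk, gAddOp_mk, mk_eq]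
      dsimp only; abel
    zero_add := by
      intro a; obtain ⟨p, rfl⟩ := mk_surj hc a
      show gAddOp hc (mk hc (0,0)) _ = _
      rw [gAddOp_mk, mk_eq]; dsimp only; abel
    add_zero := by
      intro a; obtain ⟨p, rfl⟩ := mk_surj hc a
      show gAddOp hc _ (mk hc (0,0)) = _
      rw [gAddOp_mk, mk_eq]; dsimp only; abel
    add_comm := by
      intro a b; obtain ⟨p, rfl⟩ := mk_surj hc a; obtain ⟨q, rfl⟩ := mk_surj hc b
      show gAddOp hc _ _ = gAddOp hc _ _
      rw [gAddOp_mk, gAddOp_mk, mk_eq]; dsimp only; abel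
    neg_add_cancel := by
      intro a; obtain ⟨p, rfl⟩ := mk_surj hc a
      show gAddOp hc (gNegOp hc _) _ = mk hc (0,0)
      rw [gNegOp_mk, gAddOp_mk, mk_eq]; dsimp only; abel }

/-- The pairwise scalar action of a real number. -/
noncomputable def smulPair (r : ℝ) (p : X × X) : X × X :=
  (r.toNNReal • p.1 + (-r).toNNReal • p.2, r.toNNReal • p.2 + (-r).toNNReal • p.1)

noncomputable def gSMul (r : ℝ) : G X hc → G X hc :=
  Quotient.map (smulPair r) (by
    rintro ⟨a,b⟩ ⟨a',b'⟩ (h : a + b' = a' + b)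
    show (r.toNNReal • a + (-r).toNNReal • b) + (r.toNNReal • b' + (-r).toNNReal • a')
        = (r.toNNReal • a' + (-r).toNNReal • b') + (r.toNNReal • b + (-r).toNNReal • a)
    calc (r.toNNReal • a + (-r).toNNReal • b) + (r.toNNReal • b' + (-r).toNNReal • a')
        = r.toNNReal • (a + b') + (-r).toNNReal • (a' + b) := by
          rw [smul_add, smul_add]; abel
      _ = r.toNNReal • (a' + b) + (-r).toNNReal • (a + b') := by rw [h]
      _ = (r.toNNReal • a' + (-r).toNNReal • b') + (r.toNNReal • b + (-r).toNNReal • a) := by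
          rw [smul_add, smul_add]; abel)

lemma gSMul_mk (r : ℝ) (p : X × X) : gSMul hc r (mk hc p) = mk hc (smulPair r p) := rfl

lemma mk_smul_congr (p q p' q' : ℝ≥0) (h : p + q' = p' + q) (a b : X) :
    mk hc (p • a + q • b, p • b + q • a) = mk hc (p' • a + q' • b, p' • b + q' • a) := by
  rw [mk_eq]; dsimp only
  calc (p • a + q • b) + (p' • b + q' • a)
      = (p + q') • a + (p' + q) • b := by rw [add_smul, add_smul]; abel
    _ = (p' + q) • a + (p + q') • b := by rw [h]
    _ = (p' • a + q' • b) + (p • b + q • a) := by rw [add_smul, add_smul]; abel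

lemma nn_add (r s : ℝ) :
    (r+s).toNNReal + ((-r).toNNReal + (-s).toNNReal)
      = (r.toNNReal + s.toNNReal) + (-(r+s)).toNNReal := by
  apply NNReal.coe_injective
  push_cast
  simp only [Real.coe_toNNReal', max_def]
  split_ifs <;> linarith

set_option maxHeartbeats 1000000 in
lemma nn_mul (r s : ℝ) :
    (r*s).toNNReal + (r.toNNReal * (-s).toNNReal + (-r).toNNReal * s.toNNReal)
      = (r.toNNReal * s.toNNReal + (-r).toNNReal * (-s).toNNReal) + (-(r*s)).toNNReal := by
  apply NNReal.coe_injective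
  push_cast
  simp only [Real.coe_toNNReal', max_def]
  split_ifs <;> nlinarith

noncomputable def gModule : @Module ℝ (G X hc) Real.semiring (gAddCommGroup hc).toAddCommMonoid :=
  letI := gAddCommGroup hc
  { smul := gSMul hc
    one_smul := by
      intro a; obtain ⟨⟨x, y⟩, rfl⟩ := mk_surj hc a
      show gSMul hc 1 _ = _
      rw [gSMul_mk]
      simp [smulPair, Real.toNNReal_one, Real.toNNReal_of_nonpos (by norm_num : (-1:ℝ) ≤ 0)]
    mul_smul := by
      intro r s a; obtain ⟨⟨x, y⟩, rfl⟩ := mk_surj hc a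
      show gSMul hc (r*s) _ = gSMul hc r (gSMul hc s _)
      rw [gSMul_mk, gSMul_mk, gSMul_mk]
      unfold smulPair
      dsimp only
      have h := mk_smul_congr hc (r*s).toNNReal (-(r*s)).toNNReal
        (r.toNNReal * s.toNNReal + (-r).toNNReal * (-s).toNNReal)
        (r.toNNReal * (-s).toNNReal + (-r).toNNReal * s.toNNReal)
        (nn_mul r s) x y
      rw [h, mk_eq]
      dsimp only
      simp only [add_smul, mul_smul, smul_add]
      abel
    smul_zero := by
      intro r
      show gSMul hc r (mk hc (0, 0)) = mk hc (0, 0)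
      rw [gSMul_mk]
      simp [smulPair]
    smul_add := by
      intro r a b
      obtain ⟨⟨x, y⟩, rfl⟩ := mk_surj hc a; obtain ⟨⟨z, w⟩, rfl⟩ := mk_surj hc b
      show gSMul hc r (gAddOp hc _ _) = gAddOp hc (gSMul hc r _) (gSMul hc r _)
      rw [gAddOp_mk, gSMul_mk, gSMul_mk, gSMul_mk, gAddOp_mk, mk_eq]
      unfold smulPair
      dsimp only
      simp only [smul_add]
      abel
    add_smul := by
      intro r s a; obtain ⟨⟨x, y⟩, rfl⟩ := mk_surj hc a
      show gSMul hc (r+s) _ = gAddOp hc (gSMul hc r _) (gSMul hc s _)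
      rw [gSMul_mk, gSMul_mk, gSMul_mk, gAddOp_mk]
      unfold smulPair
      dsimp only
      have h := mk_smul_congr hc (r+s).toNNReal (-(r+s)).toNNReal
        (r.toNNReal + s.toNNReal) ((-r).toNNReal + (-s).toNNReal)
        (nn_add r s) x y
      rw [h, mk_eq]
      dsimp only
      simp only [add_smul]
      abel
    zero_smul := by
      intro a; obtain ⟨⟨x, y⟩, rfl⟩ := mk_surj hc a
      show gSMul hc 0 _ = mk hc (0, 0)
      rw [gSMul_mk]
      simp [smulPair] }

end Stmt2Aux

/-- A convex cone `X` (an additive commutative monoid with a module structure over `ℝ≥0`)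
admits an injective additive, `ℝ≥0`-homogeneous map into some real vector space if and only
if `X` is cancellative. -/
theorem stmt_2 (X : Type u) [AddCommMonoid X] [Module ℝ≥0 X] :
    (∃ (V : Type u) (_ : AddCommGroup V) (_ : Module ℝ V) (f : X → V),
        Function.Injective f ∧
        (∀ x y : X, f (x + y) = f x + f y) ∧
        (∀ (c : ℝ≥0) (x : X), f (c • x) = (c : ℝ) • f x)) ↔
      (∀ x y z : X, x + y = x + z → y = z) := by
  constructor
  · rintro ⟨V, _, _, f, hinj, hadd, -⟩ x y z h
    apply hinj
    have := congrArg f h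
    rw [hadd, hadd] at this
    exact add_left_cancel this
  · intro hc
    refine ⟨Stmt2Aux.G X hc, Stmt2Aux.gAddCommGroup hc, Stmt2Aux.gModule hc,
      fun x => Stmt2Aux.mk hc (x, 0), ?_, ?_, ?_⟩
    · intro x y h
      rw [Stmt2Aux.mk_eq] at h
      simpa using h
    · intro x y
      show Stmt2Aux.mk hc (x + y, 0)
          = Stmt2Aux.gAddOp hc (Stmt2Aux.mk hc (x, 0)) (Stmt2Aux.mk hc (y, 0))
      rw [Stmt2Aux.gAddOp_mk, Stmt2Aux.mk_eq]
      simp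
    · intro c x
      show Stmt2Aux.mk hc (c • x, 0)
          = Stmt2Aux.gSMul hc (c : ℝ) (Stmt2Aux.mk hc (x, 0))
      rw [Stmt2Aux.gSMul_mk]
      simp [Stmt2Aux.smulPair, Real.toNNReal_coe,
        Real.toNNReal_of_nonpos (neg_nonpos.2 c.coe_nonneg)]
end

section
/- Let X be a cancellative convex cone (an additive commutative monoid with a module structure over ℝ≥0 satisfying the cancellation law). Then there exist a real vector space V and an injective map f : X → V such that f(x + y) = f(x) + f(y) and f(c • x) = c • f(x) for all x, y in X and c in ℝ≥0, and moreover every element of V can be written as f(y) − f(z) with y, z in X. -/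
open scoped NNReal

/-!
Take `V` to be the Grothendieck group of `X`, whose elements are formal differences `y - z`;
cancellation makes `X → V` injective. Scaling by `c : ℝ≥0` is an additive endomorphism of
`X`, so it extends to `V`, giving a semiring map `φ : ℝ≥0 →+* AddMonoid.End V`. Since every
real is a difference `r⁺ - r⁻` of nonnegative ones, `r ↦ φ r⁺ - φ r⁻` is a ring map
`ℝ →+* AddMonoid.End V`, i.e. a real vector space structure on `V`.
-/

namespace Algebra.GrothendieckAddGroup

variable {M : Type*} [AddCommMonoid M]

theorem lift_of {G : Type*} [AddCommGroup G] (f : M →+ G) (x : M) : lift f (of x) = f x :=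
  DFunLike.congr_fun (lift.symm_apply_apply f) x

theorem exists_eq_of_sub_of (g : GrothendieckAddGroup M) : ∃ y z : M, g = of y - of z := by
  induction g using AddLocalization.ind with
  | H p => exact ⟨p.1, p.2, by simp [← AddLocalization.mk_zero_eq_addMonoidOf_mk]⟩

theorem addMonoidHom_ext {G : Type*} [AddCommGroup G] {f g : GrothendieckAddGroup M →+ G}
    (h : ∀ x, f (of x) = g (of x)) : f = g :=
  lift.symm.injective (AddMonoidHom.ext h)

noncomputable def mapEnd : AddMonoid.End M →+* AddMonoid.End (GrothendieckAddGroup M) where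
  toFun φ := lift (of.comp φ)
  map_one' := addMonoidHom_ext fun x => lift_of _ x
  map_mul' φ ψ := addMonoidHom_ext fun x => by
    rw [lift_of]
    change of (φ (ψ x)) = lift (of.comp φ) (lift (of.comp ψ) (of x))
    rw [lift_of]
    exact (lift_of (of.comp (φ : M →+ M)) (ψ x)).symm
  map_zero' := addMonoidHom_ext fun x => (lift_of _ x).trans (map_zero of)
  map_add' φ ψ := addMonoidHom_ext fun x => by
    rw [lift_of]
    change of (φ x + ψ x) = lift (of.comp φ) (of x) + lift (of.comp ψ) (of x)
    rw [lift_of, lift_of, map_add]; rfl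

theorem mapEnd_apply_of (φ : AddMonoid.End M) (x : M) : mapEnd φ (of x) = of (φ x) :=
  lift_of _ x

end Algebra.GrothendieckAddGroup

theorem Real.coe_toNNReal_sub_coe_toNNReal_neg (r : ℝ) :
    (r.toNNReal : ℝ) - (-r).toNNReal = r := by
  rw [Real.coe_toNNReal', Real.coe_toNNReal', max_zero_sub_max_neg_zero_eq_self]

namespace RingHom

variable {R : Type*} [Ring R] (φ : ℝ≥0 →+* R)

theorem map_toNNReal_sub_map_toNNReal_neg {r : ℝ} {a b : ℝ≥0} (h : (a : ℝ) - b = r) :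
    φ r.toNNReal - φ (-r).toNNReal = φ a - φ b := by
  have h' : r.toNNReal + b = a + (-r).toNNReal := by
    apply NNReal.coe_injective
    push_cast
    linarith [Real.coe_toNNReal_sub_coe_toNNReal_neg r]
  rw [sub_eq_sub_iff_add_eq_add, ← map_add, ← map_add, h']

noncomputable def extendNNReal : ℝ →+* R where
  toFun r := φ r.toNNReal - φ (-r).toNNReal
  map_one' := by
    rw [φ.map_toNNReal_sub_map_toNNReal_neg (a := 1) (b := 0) (by simp), map_one, map_zero,
      sub_zero]
  map_zero' := by
    rw [φ.map_toNNReal_sub_map_toNNReal_neg (a := 0) (b := 0) (by simp), sub_self]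
  map_add' r s := by
    have hr := Real.coe_toNNReal_sub_coe_toNNReal_neg r
    have hs := Real.coe_toNNReal_sub_coe_toNNReal_neg s
    rw [φ.map_toNNReal_sub_map_toNNReal_neg (a := r.toNNReal + s.toNNReal)
      (b := (-r).toNNReal + (-s).toNNReal) (by push_cast; linarith), map_add, map_add]
    abel
  map_mul' r s := by
    rw [φ.map_toNNReal_sub_map_toNNReal_neg
      (a := r.toNNReal * s.toNNReal + (-r).toNNReal * (-s).toNNReal)
      (b := r.toNNReal * (-s).toNNReal + (-r).toNNReal * s.toNNReal) ?_]
    · simp only [map_add, map_mul]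
      noncomm_ring
    · push_cast
      linear_combination (s * Real.coe_toNNReal_sub_coe_toNNReal_neg r +
        ((r.toNNReal : ℝ) - (-r).toNNReal) * Real.coe_toNNReal_sub_coe_toNNReal_neg s)

theorem extendNNReal_coe (c : ℝ≥0) : φ.extendNNReal c = φ c :=
  (φ.map_toNNReal_sub_map_toNNReal_neg (a := c) (b := 0) (by simp)).trans (by simp)

end RingHom

/-- A cancellative convex cone `X` embeds isomorphically (injectively, additively and
`ℝ≥0`-homogeneously) into a real vector space `V`, in which every element is the formal
difference of two elements of the image of `X`. -/
theorem stmt_10 (X : Type u) [AddCancelCommMonoid X] [Module ℝ≥0 X] :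
    ∃ (V : Type u) (_ : AddCommGroup V) (_ : Module ℝ V) (f : X → V),
      Function.Injective f ∧
      (∀ x y : X, f (x + y) = f x + f y) ∧
      (∀ (c : ℝ≥0) (x : X), f (c • x) = (c : ℝ) • f x) ∧
      (∀ v : V, ∃ y z : X, v = f y - f z) := by
  let ψ : ℝ →+* AddMonoid.End (Algebra.GrothendieckAddGroup X) :=
    (Algebra.GrothendieckAddGroup.mapEnd.comp (Module.toAddMonoidEnd ℝ≥0 X)).extendNNReal
  refine ⟨Algebra.GrothendieckAddGroup X, inferInstance, Module.compHom _ ψ,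
    Algebra.GrothendieckAddGroup.of, Algebra.GrothendieckAddGroup.of_injective, map_add _,
    fun c x => ?_,
    Algebra.GrothendieckAddGroup.exists_eq_of_sub_of⟩
  change _ = ψ c (Algebra.GrothendieckAddGroup.of x)
  rw [RingHom.extendNNReal_coe]
  exact (Algebra.GrothendieckAddGroup.mapEnd_apply_of (Module.toAddMonoidEnd ℝ≥0 X c) x).symm
end

section
/- Let X be a uniquely divisible additive commutative monoid. Then there exist an additive commutative monoid C equipped with a module structure over ℝ≥0 (a convex cone) and an injective additive monoid homomorphism M : X → C such that every element of C is a finite sum of elements of the form c • M(x) with c in ℝ≥0 and x in X. -/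
open scoped NNReal Pointwise

/-!
Additive characters `χ : X → (ℝ≥0, *)` separate the points of `X`, so evaluation embeds `X` into
the functions on characters with values in `(ℝ≥0, *)`, a convex cone under `c • t = t ^ c`; the
cone spanned by the image is the required `C`.

To separate `a ≠ b`, let the face of `a` be the set of summands of multiples of `a`. If `b` is not
in the face of `a` (or vice versa), the indicator of that face separates them. Otherwise `a` and
`b` have the same face `F`, and `a - b` has infinite order in the Grothendieck group of `F`: an
equation `n • a + z = n • b + z` with `z ∈ F` can be absorbed into multiples of `n • a` and
`n • b` and then forces `k • a = k • b` for some `k > 0`, hence `a = b`. Since `ℝ` is divisible,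
some additive `r : F → ℝ` has `r a ≠ r b`, and `exp ∘ r` on `F`, extended by `0`, is the
separating character.
-/

namespace ConeEmbedding

noncomputable instance : SMul ℝ≥0 (Additive ℝ≥0) := ⟨fun c x => .ofMul (x.toMul ^ (c : ℝ))⟩

lemma toMul_smul (c : ℝ≥0) (x : Additive ℝ≥0) : (c • x).toMul = x.toMul ^ (c : ℝ) := rfl

/-- The convention `0 ^ 0 = 1` keeps `zero_smul` true at `x = ofMul 0`. -/
noncomputable instance : Module ℝ≥0 (Additive ℝ≥0) where
  one_smul x := NNReal.rpow_one x.toMul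
  mul_smul c d x := by
    apply Additive.toMul.injective
    simp only [toMul_smul, NNReal.coe_mul, mul_comm (c : ℝ), NNReal.rpow_mul]
  smul_zero c := NNReal.one_rpow (c : ℝ)
  smul_add c x y := NNReal.mul_rpow
  add_smul c d x := by
    apply Additive.toMul.injective
    rcases eq_or_ne (c + d) 0 with h | h
    · obtain ⟨rfl, rfl⟩ := add_eq_zero.mp h
      simp [toMul_smul]
    · simp only [toMul_smul, toMul_add, NNReal.coe_add]
      exact NNReal.rpow_add' (by exact_mod_cast h) _
  zero_smul x := NNReal.rpow_zero x.toMul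

variable {X : Type*} [AddCommMonoid X]

def face (a : X) : AddSubmonoid X where
  carrier := {z | ∃ w : X, ∃ n : ℕ, z + w = n • a}
  zero_mem' := ⟨0, 0, by simp⟩
  add_mem' := by
    rintro x y ⟨w, n, hw⟩ ⟨v, m, hv⟩
    exact ⟨w + v, n + m, by rw [add_nsmul, ← hw, ← hv, add_add_add_comm]⟩

lemma mem_face_self (a : X) : a ∈ face a := ⟨0, 1, by simp⟩

lemma mem_face_of_add_mem {a x y : X} (h : x + y ∈ face a) : x ∈ face a :=
  let ⟨w, n, hw⟩ := h
  ⟨y + w, n, by rw [← hw, add_assoc]⟩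

lemma face_le_face {a b : X} (h : a ∈ face b) : face a ≤ face b := by
  rintro z ⟨w, n, hw⟩
  obtain ⟨v, m, hv⟩ := h
  exact ⟨w + n • v, n * m, by rw [← add_assoc, hw, ← nsmul_add, hv, mul_nsmul']⟩

lemma add_nsmul_eq_add_nsmul {u v s : X} (h : u + s = v + s) {n : ℕ} (hn : n ≠ 0) :
    u + n • s = v + n • s := by
  obtain ⟨k, rfl⟩ := Nat.exists_eq_succ_of_ne_zero hn
  rw [succ_nsmul', ← add_assoc, h, add_assoc]

lemma succ_nsmul_eq_add_nsmul {u v s t : X} {N : ℕ} (h : u + s = v + s) (hs : s + t = N • u) :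
    (N + 1) • u = v + N • u := by
  rw [succ_nsmul', ← hs, ← add_assoc, ← add_assoc, h]

lemma add_nsmul_eq_nsmul_add_nsmul {u v : X} {M : ℕ} (h : (M + 1) • u = v + M • u) (k : ℕ) :
    (M + k) • u = k • v + M • u := by
  induction k with
  | zero => simp
  | succ k ih =>
    rw [← add_assoc, succ_nsmul', ih, add_left_comm, ← succ_nsmul', h, succ_nsmul, add_assoc]

lemma nsmul_eq_nsmul_of_succ_nsmul_eq {u v : X} {M N : ℕ} (hu : (M + 1) • u = v + M • u)
    (hv : (N + 1) • v = u + N • v) : (M + N) • u = (M + N) • v := by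
  rw [add_nsmul_eq_nsmul_add_nsmul hu N, add_comm M N, add_nsmul_eq_nsmul_add_nsmul hv M, add_comm]

lemma exists_succ_nsmul_eq {a b z : X} {n : ℕ} (hn : n ≠ 0) (hz : z ∈ face a)
    (h : n • a + z = n • b + z) :
    ∃ M : ℕ, 0 < M ∧ (M + 1) • (n • a) = n • b + M • (n • a) := by
  obtain ⟨w, m, hw⟩ := hz
  refine ⟨m + 1, m.succ_pos, succ_nsmul_eq_add_nsmul (add_nsmul_eq_add_nsmul h hn)
    (t := n • w + n • a) ?_⟩
  -- `t` completes `n • z` to `(m + 1) • (n • a)`, using `z + w = m • a`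
  rw [← add_assoc, ← nsmul_add, hw, succ_nsmul, nsmul_left_comm]

lemma eq_of_nsmul_add_eq_nsmul_add
    (hinj : ∀ n : ℕ, 0 < n → ∀ y₁ y₂ : X, n • y₁ = n • y₂ → y₁ = y₂)
    {a b z : X} {n : ℕ} (hn : 0 < n) (hza : z ∈ face a) (hzb : z ∈ face b)
    (h : n • a + z = n • b + z) : a = b := by
  obtain ⟨M, hM₀, hM⟩ := exists_succ_nsmul_eq hn.ne' hza h
  obtain ⟨N, -, hN⟩ := exists_succ_nsmul_eq hn.ne' hzb h.symm
  refine hinj ((M + N) * n) (by positivity) a b ?_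
  rw [mul_nsmul', mul_nsmul']
  exact nsmul_eq_nsmul_of_succ_nsmul_eq hM hN

open Submodule in
theorem mem_closure_smul_span_range {R M ι : Type*} [Semiring R] [AddCommMonoid M] [Module R M]
    (f : ι → M) (y : span R (Set.range f)) :
    y ∈ AddSubmonoid.closure
      {z | ∃ (c : R) (i : ι), z = c • (⟨f i, subset_span ⟨i, rfl⟩⟩ : span R (Set.range f))} := by
  have hy : y ∈ AddSubmonoid.closure
      ((Set.univ : Set R) • (((↑) : span R (Set.range f) → M) ⁻¹' Set.range f)) := by
    rw [← span_eq_closure, span_span_coe_preimage]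
    trivial
  convert hy using 2
  ext z
  simp only [Set.mem_smul, Set.mem_univ, true_and, Set.mem_preimage, Set.mem_range]
  constructor
  · rintro ⟨c, i, rfl⟩
    exact ⟨c, _, ⟨i, rfl⟩, rfl⟩
  · rintro ⟨c, w, ⟨i, hi⟩, rfl⟩
    exact ⟨c, i, congrArg (c • ·) (Subtype.ext hi.symm)⟩

theorem exists_addMonoidHom_real_ne_zero {G : Type*} [AddCommGroup G] {g : G}
    (hg : ¬IsOfFinAddOrder g) : ∃ f : G →+ ℝ, f g ≠ 0 := by
  obtain ⟨f, hf⟩ := (Module.Baer.of_divisible ℝ).extension_property_addMonoidHom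
    (zmultiplesHom G g) (injective_zsmul_iff_not_isOfFinAddOrder.mpr hg) (Int.castAddHom ℝ)
  have hfg : f g = 1 := by simpa using DFunLike.congr_fun hf 1
  exact ⟨f, by simp [hfg]⟩

theorem exists_addMonoidHom_face_ne
    (hinj : ∀ n : ℕ, 0 < n → ∀ y₁ y₂ : X, n • y₁ = n • y₂ → y₁ = y₂)
    {a b : X} (hne : a ≠ b) (hb : b ∈ face a) (ha : a ∈ face b) :
    ∃ r : face a →+ ℝ, r ⟨a, mem_face_self a⟩ ≠ r ⟨b, hb⟩ := by
  let ι := Algebra.GrothendieckAddGroup.of (M := face a)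
  obtain ⟨f, hf⟩ : ∃ f : _ →+ ℝ, f (ι ⟨a, mem_face_self a⟩ - ι ⟨b, hb⟩) ≠ 0 := by
    refine exists_addMonoidHom_real_ne_zero ?_
    rw [isOfFinAddOrder_iff_nsmul_eq_zero]
    rintro ⟨n, hn, hzero⟩
    rw [nsmul_sub, sub_eq_zero, ← map_nsmul, ← map_nsmul] at hzero
    obtain ⟨c, hz⟩ := (AddLocalization.addMonoidOf ⊤).eq_iff_exists.mp hzero
    refine hne (eq_of_nsmul_add_eq_nsmul_add hinj hn c.1.2 (face_le_face ha c.1.2) ?_)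
    simpa [add_comm] using congrArg Subtype.val hz
  exact ⟨f.comp ι, fun h => hf (by rw [map_sub, sub_eq_zero]; exact h)⟩

open Classical in
noncomputable def faceChar (F : AddSubmonoid X) (hF : ∀ x y, x + y ∈ F → x ∈ F)
    (r : F →+ ℝ) : AddChar X ℝ≥0 where
  toFun x := if hx : x ∈ F then (Real.exp (r ⟨x, hx⟩)).toNNReal else 0
  map_zero_eq_one' := by
    rw [dif_pos F.zero_mem]
    change (Real.exp (r 0)).toNNReal = 1
    rw [map_zero, Real.exp_zero, Real.toNNReal_one]
  map_add_eq_mul' x y := by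
    by_cases hx : x ∈ F
    · by_cases hy : y ∈ F
      · rw [dif_pos (F.add_mem hx hy), dif_pos hx, dif_pos hy,
          ← Real.toNNReal_mul (Real.exp_pos _).le, ← Real.exp_add, ← map_add, AddMemClass.mk_add_mk]
      · rw [dif_neg fun h => hy (hF y x (add_comm x y ▸ h)), dif_neg hy, mul_zero]
    · rw [dif_neg fun h => hx (hF x y h), dif_neg hx, zero_mul]

lemma faceChar_apply_of_mem {F : AddSubmonoid X} {hF : ∀ x y, x + y ∈ F → x ∈ F} {r : F →+ ℝ}
    {x : X} (hx : x ∈ F) : faceChar F hF r x = (Real.exp (r ⟨x, hx⟩)).toNNReal := dif_pos hx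

lemma faceChar_apply_of_notMem {F : AddSubmonoid X} {hF : ∀ x y, x + y ∈ F → x ∈ F} {r : F →+ ℝ}
    {x : X} (hx : x ∉ F) : faceChar F hF r x = 0 := dif_neg hx

theorem exists_addChar_ne (hinj : ∀ n : ℕ, 0 < n → ∀ y₁ y₂ : X, n • y₁ = n • y₂ → y₁ = y₂)
    {a b : X} (hne : a ≠ b) : ∃ χ : AddChar X ℝ≥0, χ a ≠ χ b := by
  have indicator {a b : X} (hb : b ∉ face a) : ∃ χ : AddChar X ℝ≥0, χ a ≠ χ b :=
    ⟨faceChar (face a) (fun _ _ => mem_face_of_add_mem) 0, by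
      simp [faceChar_apply_of_mem (mem_face_self a), faceChar_apply_of_notMem hb]⟩
  by_cases hb : b ∈ face a
  · by_cases ha : a ∈ face b
    · obtain ⟨r, hr⟩ := exists_addMonoidHom_face_ne hinj hne hb ha
      refine ⟨faceChar (face a) (fun _ _ => mem_face_of_add_mem) r, ?_⟩
      rw [faceChar_apply_of_mem (mem_face_self a), faceChar_apply_of_mem hb]
      simpa [Real.toNNReal_eq_toNNReal_iff, Real.exp_nonneg] using hr
    · obtain ⟨χ, hχ⟩ := indicator ha
      exact ⟨χ, hχ.symm⟩
  · exact indicator hb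

end ConeEmbedding

open ConeEmbedding in
theorem stmt_17_general (X : Type u) [AddCommMonoid X]
    (hinj : ∀ (n : ℕ), 0 < n → ∀ y₁ y₂ : X, n • y₁ = n • y₂ → y₁ = y₂) :
    ∃ (C : Type u) (_ : AddCommMonoid C) (_ : Module ℝ≥0 C) (M : X →+ C),
      Function.Injective M ∧
      ∀ y : C, y ∈ AddSubmonoid.closure {z : C | ∃ (c : ℝ≥0) (x : X), z = c • M x} := by
  let ev : X →+ (AddChar X ℝ≥0 → Additive ℝ≥0) := AddMonoidHom.pi fun χ => χ.toAddMonoidHom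
  let M : X →+ Submodule.span ℝ≥0 (Set.range ev) :=
    ev.codRestrict _ fun x => Submodule.subset_span ⟨x, rfl⟩
  refine ⟨_, inferInstance, inferInstance, M, fun x y hxy => ?_, fun y => ?_⟩
  · by_contra hne
    obtain ⟨χ, hχ⟩ := exists_addChar_ne hinj hne
    exact hχ (congrFun (congrArg Subtype.val hxy) χ)
  · exact mem_closure_smul_span_range ev y

/-- A uniquely divisible additive commutative monoid `X` admits an injective additive
monoid homomorphism `M` into a convex cone `C` (an additive commutative monoid with an
`ℝ≥0`-module structure) such that every element of `C` is a finite sum of elements of the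
form `c • M x` with `c : ℝ≥0` and `x : X`. -/
theorem stmt_17 (X : Type u) [AddCommMonoid X]
    (hdiv : ∀ (x : X) (n : ℕ), 0 < n → ∃ y : X, n • y = x)
    (hinj : ∀ (n : ℕ), 0 < n → ∀ y₁ y₂ : X, n • y₁ = n • y₂ → y₁ = y₂) :
    ∃ (C : Type u) (_ : AddCommMonoid C) (_ : Module ℝ≥0 C) (M : X →+ C),
      Function.Injective M ∧
      ∀ y : C, y ∈ AddSubmonoid.closure {z : C | ∃ (c : ℝ≥0) (x : X), z = c • M x} :=
  stmt_17_general X hinj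
end
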